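/- arXiv:2402.17947 — 2 statements merged into one kernel-verified Lean document; each statement's English description precedes it below -/
import Mathlib

section
/- Let X be a real Banach space, A : X → Set X an accretive operator with zer A ≠ ∅, and for each γ > 0 let J_γ : X → X be a resolvent function of A. Let α ∈ [0,1), f : X → X an α-contraction, x ∈ X, (α_n) a sequence in [0,1], (λ_n) a sequence in (0,∞), and (x_n) the VAM iteration x_0 = x, x_{n+1} = α_n • f(x_n) + (1 − α_n) • J_{λ_n}(x_n). Assume σ₁ is a rate of divergence of Σ_{n=0}^∞ α_n, σ₂ is a Cauchy modulus of Σ_{n=0}^∞ |α_n − α_{n+1}|, and γ₁ is a Cauchy modulus of Σ_{n=0}^∞ |1 − λ_{n+1}/λ_n|. Let z ∈ zer A and K*_z ∈ ℕ, K*_z ≥ 1, with K*_z ≥ max{‖x − z‖, ‖f(z) − z‖/(1 − α)}. Define χ*(k) = max{σ₂(4K*_z(k+1) − 1), γ₁(4K*_z(k+1) − 1)} and Φ*(k) = σ₁(⌈(χ*(2k+1) + 1 + ⌈ln(4K*_z(k+1))⌉)/(1 − α)⌉ + 1). Then Φ* is a rate of asymptotic regularity of (x_n): for all k ∈ ℕ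 and all n ≥ Φ*(k), ‖x_{n+1} − x_n‖ ≤ 1/(k+1). -/
/-!
The iterates stay in the closed ball of radius `K = K*_z` around `z`, since `f` and every resolvent
map that ball into itself. Accretivity makes `J_γ` nonexpansive and gives
`‖J_γ u - J_μ u‖ ≤ |1 - γ/μ| ‖u - J_μ u‖`; comparing two consecutive steps then yields, for
`d_n = ‖x_{n+1} - x_n‖`,
`d_{n+1} ≤ (1 - (1 - α) α_{n+1}) d_n + 2K (|α_n - α_{n+1}| + |1 - λ_{n+1}/λ_n|)`.
Unrolling from `N = χ*(2k+1) + 1` with `1 - t ≤ exp (-t)`, the homogeneous part is at most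
`2K exp (-(1 - α) ∑ α_i)`, which the rate of divergence makes `≤ 1/(2(k+1))` beyond `Φ*(k)`;
the Cauchy moduli bound the accumulated errors by `1/(2(k+1))`.
-/

open Metric Set Finset

section Accretive

variable {X : Type*} [NormedAddCommGroup X] [NormedSpace ℝ X]

def IsAccretive (A : X → Set X) : Prop :=
  ∀ x y u v : X, u ∈ A x → v ∈ A y → ∀ γ : ℝ, 0 < γ → ‖x - y‖ ≤ ‖x - y + γ • (u - v)‖

def IsResolventFamily (A : X → Set X) (J : ℝ → X → X) : Prop :=
  ∀ γ : ℝ, 0 < γ → ∀ x : X, γ⁻¹ • (x - J γ x) ∈ A (J γ x)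

namespace IsResolventFamily

variable {A : X → Set X} {J : ℝ → X → X} {γ μ : ℝ}

theorem apply_eq_self (hA : IsAccretive A) (hJ : IsResolventFamily A J) {z : X}
    (hz : (0 : X) ∈ A z) (hγ : 0 < γ) : J γ z = z := by
  have h := hA _ _ _ _ (hJ γ hγ z) hz γ hγ
  have hzero : J γ z - z + γ • (γ⁻¹ • (z - J γ z) - 0) = 0 := by
    rw [sub_zero, smul_inv_smul₀ hγ.ne']; abel
  rw [hzero, norm_zero, norm_le_zero_iff, sub_eq_zero] at h
  exact h

theorem norm_sub_le (hA : IsAccretive A) (hJ : IsResolventFamily A J) (hγ : 0 < γ) (u v : X) :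
    ‖J γ u - J γ v‖ ≤ ‖u - v‖ := by
  have h := hA _ _ _ _ (hJ γ hγ u) (hJ γ hγ v) γ hγ
  rwa [smul_sub, smul_inv_smul₀ hγ.ne', smul_inv_smul₀ hγ.ne',
    show J γ u - J γ v + (u - J γ u - (v - J γ v)) = u - v by abel] at h

theorem norm_apply_sub_apply_le (hA : IsAccretive A) (hJ : IsResolventFamily A J) (hγ : 0 < γ)
    (hμ : 0 < μ) (u : X) : ‖J γ u - J μ u‖ ≤ |1 - γ / μ| * ‖u - J μ u‖ := by
  have h := hA _ _ _ _ (hJ γ hγ u) (hJ μ hμ u) γ hγ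
  have hres : J γ u - J μ u + γ • (γ⁻¹ • (u - J γ u) - μ⁻¹ • (u - J μ u))
      = (1 - γ / μ) • (u - J μ u) := by
    rw [smul_sub, smul_inv_smul₀ hγ.ne', smul_smul, sub_smul, one_smul, div_eq_mul_inv]
    abel
  rwa [hres, norm_smul, Real.norm_eq_abs] at h

theorem mapsTo_closedBall (hA : IsAccretive A) (hJ : IsResolventFamily A J) {z : X}
    (hz : (0 : X) ∈ A z) (hγ : 0 < γ) (r : ℝ) :
    MapsTo (J γ) (closedBall z r) (closedBall z r) := fun y hy => by
  rw [mem_closedBall_iff_norm] at hy ⊢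
  calc ‖J γ y - z‖ = ‖J γ y - J γ z‖ := by rw [hJ.apply_eq_self hA hz hγ]
    _ ≤ ‖y - z‖ := hJ.norm_sub_le hA hγ y z
    _ ≤ r := hy

end IsResolventFamily

end Accretive

section ClosedBall

variable {X : Type*} [NormedAddCommGroup X]

theorem mapsTo_closedBall_of_norm_sub_le_mul {f : X → X} {α r : ℝ} {z : X} (hα0 : 0 ≤ α)
    (hf : ∀ x y : X, ‖f x - f y‖ ≤ α * ‖x - y‖) (hfz : ‖f z - z‖ ≤ (1 - α) * r) :
    MapsTo f (closedBall z r) (closedBall z r) := fun y hy => by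
  rw [mem_closedBall_iff_norm] at hy ⊢
  calc ‖f y - z‖ ≤ ‖f y - f z‖ + ‖f z - z‖ := norm_sub_le_norm_sub_add_norm_sub _ _ _
    _ ≤ α * r + (1 - α) * r := add_le_add ((hf y z).trans (by gcongr)) hfz
    _ = r := by ring

theorem norm_sub_le_two_mul_of_mem_closedBall {u v z : X} {r : ℝ} (hu : u ∈ closedBall z r)
    (hv : v ∈ closedBall z r) : ‖u - v‖ ≤ 2 * r := by
  rw [mem_closedBall_iff_norm] at hu hv
  calc ‖u - v‖ ≤ ‖u - z‖ + ‖z - v‖ := norm_sub_le_norm_sub_add_norm_sub _ _ _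
    _ ≤ 2 * r := by rw [norm_sub_rev z v]; linarith

end ClosedBall

section RealSequences

theorem le_exp_neg_sum_mul_add_sum {s c e : ℕ → ℝ} (hc0 : ∀ n, 0 ≤ c n) (hc1 : ∀ n, c n ≤ 1)
    (he : ∀ n, 0 ≤ e n) (hs : ∀ n, s (n + 1) ≤ (1 - c n) * s n + e n) {N : ℕ} (hsN : 0 ≤ s N) :
    ∀ p : ℕ, s (N + p) ≤
      Real.exp (-∑ i ∈ range p, c (N + i)) * s N + ∑ i ∈ range p, e (N + i)
  | 0 => by simp
  | p + 1 => by
    have ih := le_exp_neg_sum_mul_add_sum hc0 hc1 he hs hsN p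
    have hE : 0 ≤ ∑ i ∈ range p, e (N + i) := sum_nonneg fun i _ => he _
    have hc := Real.one_sub_le_exp_neg (c (N + p))
    rw [sum_range_succ, sum_range_succ, neg_add, Real.exp_add, ← add_assoc N]
    calc s (N + p + 1) ≤ (1 - c (N + p)) * s (N + p) + e (N + p) := hs _
      _ ≤ (1 - c (N + p)) * (Real.exp (-∑ i ∈ range p, c (N + i)) * s N +
            ∑ i ∈ range p, e (N + i)) + e (N + p) := by
          gcongr; linarith [hc1 (N + p)]
      _ ≤ Real.exp (-c (N + p)) * (Real.exp (-∑ i ∈ range p, c (N + i)) * s N) +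
            ∑ i ∈ range p, e (N + i) + e (N + p) := by
          rw [mul_add]
          gcongr
          · exact mul_le_of_le_one_left hE (by linarith [hc0 (N + p)])
      _ = _ := by ring

def IsRateOfDivergence (b : ℕ → ℝ) (θ : ℕ → ℕ) : Prop :=
  ∀ n : ℕ, (n : ℝ) ≤ ∑ i ∈ range (θ n + 1), b i

def IsCauchyModulus (b : ℕ → ℝ) (χ : ℕ → ℕ) : Prop :=
  ∀ k : ℕ, ∀ n, χ k ≤ n → ∀ p : ℕ, ∑ i ∈ Icc (n + 1) (n + p), b i ≤ 1 / (k + 1)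

theorem IsCauchyModulus.sum_range_le {b : ℕ → ℝ} {χ : ℕ → ℕ} (hχ : IsCauchyModulus b χ)
    {m N : ℕ} (hm : 0 < m) (hN : χ (m - 1) ≤ N) (p : ℕ) :
    ∑ i ∈ range p, b (N + 1 + i) ≤ 1 / m := by
  have h := hχ (m - 1) N hN p
  rwa [← Finset.Ico_add_one_right_eq_Icc, sum_Ico_eq_sum_range, Nat.cast_pred hm, sub_add_cancel,
    show N + p + 1 - (N + 1) = p by omega] at h

theorem IsRateOfDivergence.exists_eq_add_le_mul_sum {b : ℕ → ℝ} {σ : ℕ → ℕ}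
    (hσ : IsRateOfDivergence b σ) (hb0 : ∀ i, 0 ≤ b i) (hb1 : ∀ i, b i ≤ 1) {c : ℝ} (hc0 : 0 < c)
    (hc1 : c ≤ 1) {N L n : ℕ} (hn : σ (⌈((N + L : ℕ) : ℝ) / c⌉₊ + 1) ≤ n) :
    ∃ p, n = N + p ∧ (L : ℝ) ≤ c * ∑ i ∈ range p, b (N + 1 + i) := by
  set M := ⌈((N + L : ℕ) : ℝ) / c⌉₊
  have hM : (N : ℝ) + L ≤ c * M := by
    have h := (div_le_iff₀ hc0).1 (Nat.le_ceil (((N + L : ℕ) : ℝ) / c))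
    rw [mul_comm] at h
    exact_mod_cast h
  have hsum_le : ∀ m, ∑ i ∈ range m, b i ≤ m := fun m => by
    simpa using sum_le_card_nsmul (range m) b 1 fun i _ => hb1 i
  have hdiv : (M : ℝ) + 1 ≤ ∑ i ∈ range (n + 1), b i := by
    have h := hσ (M + 1)
    push_cast at h
    exact h.trans (sum_le_sum_of_subset_of_nonneg (range_subset_range.2 (by omega))
      fun i _ _ => hb0 i)
  have hNn : N ≤ n := by
    have : (N : ℝ) ≤ n := by
      have := hsum_le (n + 1)
      have := mul_le_of_le_one_left (Nat.cast_nonneg M) hc1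
      push_cast at *
      linarith [(Nat.cast_nonneg L : (0 : ℝ) ≤ L)]
    exact_mod_cast this
  obtain ⟨p, rfl⟩ := Nat.exists_eq_add_of_le hNn
  refine ⟨p, rfl, ?_⟩
  rw [show N + p + 1 = N + 1 + p by ring, sum_range_add] at hdiv
  have htail : (M : ℝ) - N ≤ ∑ i ∈ range p, b (N + 1 + i) := by
    have := hsum_le (N + 1)
    push_cast at this
    linarith
  calc (L : ℝ) ≤ c * (M - N) := by
        linarith [mul_le_of_le_one_left (Nat.cast_nonneg N : (0 : ℝ) ≤ N) hc1]
    _ ≤ c * ∑ i ∈ range p, b (N + 1 + i) := by gcongr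

end RealSequences

section Iteration

variable {X : Type*} [NormedAddCommGroup X] [NormedSpace ℝ X]

def IsVAMIteration (J : ℝ → X → X) (f : X → X) (a lam : ℕ → ℝ) (xs : ℕ → X) : Prop :=
  ∀ n : ℕ, xs (n + 1) = a n • f (xs n) + (1 - a n) • J (lam n) (xs n)

variable {A : X → Set X} {J : ℝ → X → X} {α : ℝ} {f : X → X}

theorem norm_vam_step_sub_le (hA : IsAccretive A) (hJ : IsResolventFamily A J)
    (hf : ∀ x y : X, ‖f x - f y‖ ≤ α * ‖x - y‖) {t s γ μ : ℝ} (ht : t ∈ Icc (0 : ℝ) 1)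
    (hγ : 0 < γ) (hμ : 0 < μ) (u v : X) :
    ‖(t • f u + (1 - t) • J γ u) - (s • f v + (1 - s) • J μ v)‖ ≤
      (1 - (1 - α) * t) * ‖u - v‖ + |t - s| * ‖f v - J μ v‖ + |1 - γ / μ| * ‖v - J μ v‖ := by
  obtain ⟨ht0, ht1⟩ := ht
  have hJJ : ‖J γ u - J μ v‖ ≤ ‖u - v‖ + |1 - γ / μ| * ‖v - J μ v‖ :=
    calc ‖J γ u - J μ v‖ ≤ ‖J γ u - J γ v‖ + ‖J γ v - J μ v‖ :=
          norm_sub_le_norm_sub_add_norm_sub _ _ _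
      _ ≤ _ := add_le_add (hJ.norm_sub_le hA hγ u v) (hJ.norm_apply_sub_apply_le hA hγ hμ v)
  have hsplit : (t • f u + (1 - t) • J γ u) - (s • f v + (1 - s) • J μ v)
      = t • (f u - f v) + (t - s) • (f v - J μ v) + (1 - t) • (J γ u - J μ v) := by
    module
  rw [hsplit]
  refine norm_add₃_le.trans ?_
  rw [norm_smul, norm_smul, norm_smul, Real.norm_eq_abs, Real.norm_eq_abs, Real.norm_eq_abs,
    abs_of_nonneg ht0, abs_of_nonneg (sub_nonneg.2 ht1)]
  have hfuv := mul_le_mul_of_nonneg_left (hf u v) ht0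
  have hJuv := mul_le_mul_of_nonneg_left hJJ (sub_nonneg.2 ht1)
  have hdrop : (1 - t) * (|1 - γ / μ| * ‖v - J μ v‖) ≤ |1 - γ / μ| * ‖v - J μ v‖ :=
    mul_le_of_le_one_left (by positivity) (by linarith)
  nlinarith

variable {a lam : ℕ → ℝ} {xs : ℕ → X} {z : X} {r : ℝ}

namespace IsVAMIteration

theorem mem_closedBall (hxs : IsVAMIteration J f a lam xs) (hA : IsAccretive A)
    (hJ : IsResolventFamily A J) (hz : (0 : X) ∈ A z) (hα0 : 0 ≤ α)
    (hf : ∀ x y : X, ‖f x - f y‖ ≤ α * ‖x - y‖) (hfz : ‖f z - z‖ ≤ (1 - α) * r)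
    (ha : ∀ n, a n ∈ Icc (0 : ℝ) 1) (hlam : ∀ n, 0 < lam n) (hx : xs 0 ∈ closedBall z r) :
    ∀ n, xs n ∈ closedBall z r
  | 0 => hx
  | n + 1 => by
    have hn := mem_closedBall hxs hA hJ hz hα0 hf hfz ha hlam hx n
    rw [hxs n]
    exact convex_closedBall z r
      (mapsTo_closedBall_of_norm_sub_le_mul hα0 hf hfz hn)
      (hJ.mapsTo_closedBall hA hz (hlam n) r hn) (ha n).1 (sub_nonneg.2 (ha n).2) (by ring)

theorem norm_succ_succ_sub_le (hxs : IsVAMIteration J f a lam xs) (hA : IsAccretive A)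
    (hJ : IsResolventFamily A J) (hz : (0 : X) ∈ A z) (hα0 : 0 ≤ α)
    (hf : ∀ x y : X, ‖f x - f y‖ ≤ α * ‖x - y‖) (hfz : ‖f z - z‖ ≤ (1 - α) * r)
    (ha : ∀ n, a n ∈ Icc (0 : ℝ) 1) (hlam : ∀ n, 0 < lam n) {m : ℕ}
    (hm : xs m ∈ closedBall z r) :
    ‖xs (m + 1 + 1) - xs (m + 1)‖ ≤ (1 - (1 - α) * a (m + 1)) * ‖xs (m + 1) - xs m‖ +
      2 * r * (|a m - a (m + 1)| + |1 - lam (m + 1) / lam m|) := by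
  have hJm := hJ.mapsTo_closedBall hA hz (hlam m) r hm
  have hfJ := norm_sub_le_two_mul_of_mem_closedBall
    (mapsTo_closedBall_of_norm_sub_le_mul hα0 hf hfz hm) hJm
  have hxJ := norm_sub_le_two_mul_of_mem_closedBall hm hJm
  rw [hxs (m + 1), hxs m]
  refine (norm_vam_step_sub_le hA hJ hf (ha (m + 1)) (hlam (m + 1)) (hlam m) _ _).trans ?_
  rw [abs_sub_comm (a (m + 1))]
  nlinarith [abs_nonneg (a m - a (m + 1)), abs_nonneg (1 - lam (m + 1) / lam m)]

theorem norm_succ_sub_le_exp (hxs : IsVAMIteration J f a lam xs) (hA : IsAccretive A)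
    (hJ : IsResolventFamily A J) (hz : (0 : X) ∈ A z) (hα0 : 0 ≤ α) (hα1 : α ≤ 1)
    (hf : ∀ x y : X, ‖f x - f y‖ ≤ α * ‖x - y‖) (hfz : ‖f z - z‖ ≤ (1 - α) * r)
    (ha : ∀ n, a n ∈ Icc (0 : ℝ) 1) (hlam : ∀ n, 0 < lam n) (hx : xs 0 ∈ closedBall z r)
    (N p : ℕ) :
    ‖xs (N + p + 1) - xs (N + p)‖ ≤
      2 * r * Real.exp (-((1 - α) * ∑ i ∈ range p, a (N + 1 + i))) +
      2 * r * (∑ i ∈ range p, |a (N + i) - a (N + i + 1)| +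
        ∑ i ∈ range p, |1 - lam (N + i + 1) / lam (N + i)|) := by
  have hball := hxs.mem_closedBall hA hJ hz hα0 hf hfz ha hlam hx
  have hr : 0 ≤ r := by simpa using (norm_nonneg _).trans (mem_closedBall_iff_norm.1 (hball 0))
  have h := le_exp_neg_sum_mul_add_sum (N := N) (s := fun m => ‖xs (m + 1) - xs m‖)
    (c := fun m => (1 - α) * a (m + 1))
    (e := fun m => 2 * r * (|a m - a (m + 1)| + |1 - lam (m + 1) / lam m|))
    (fun n => mul_nonneg (by linarith) (ha _).1)
    (fun n => mul_le_one₀ (by linarith) (ha _).1 (ha _).2) (fun n => by positivity)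
    (fun m => hxs.norm_succ_succ_sub_le hA hJ hz hα0 hf hfz ha hlam (hball m)) (norm_nonneg _) p
  simp only [← mul_sum, sum_add_distrib] at h
  refine h.trans (add_le_add ?_ le_rfl)
  rw [mul_comm]
  simp_rw [add_right_comm N _ 1]
  gcongr
  exact norm_sub_le_two_mul_of_mem_closedBall (hball _) (hball _)

end IsVAMIteration

end Iteration

theorem stmt_15_general {X : Type*} [NormedAddCommGroup X] [NormedSpace ℝ X]
    (A : X → Set X)
    (hA : ∀ x y u v : X, u ∈ A x → v ∈ A y → ∀ γ : ℝ, 0 < γ →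
      ‖x - y‖ ≤ ‖x - y + γ • (u - v)‖)
    (Jr : ℝ → X → X)
    (hJ : ∀ γ : ℝ, 0 < γ → ∀ x : X, γ⁻¹ • (x - Jr γ x) ∈ A (Jr γ x))
    (α : ℝ) (hα0 : 0 ≤ α) (hα1 : α < 1)
    (f : X → X) (hf : ∀ x y : X, ‖f x - f y‖ ≤ α * ‖x - y‖)
    (x : X)
    (a : ℕ → ℝ) (ha : ∀ n, a n ∈ Set.Icc (0 : ℝ) 1)
    (lam : ℕ → ℝ) (hlam : ∀ n, 0 < lam n)
    (xs : ℕ → X) (hxs0 : xs 0 = x)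
    (hxs : ∀ n : ℕ, xs (n + 1) = a n • f (xs n) + (1 - a n) • Jr (lam n) (xs n))
    -- σ₁ is a rate of divergence of Σ a n
    (σ₁ : ℕ → ℕ) (hσ₁ : ∀ n : ℕ, (n : ℝ) ≤ ∑ i ∈ Finset.range (σ₁ n + 1), a i)
    -- σ₂ is a Cauchy modulus of Σ |a n - a (n+1)|
    (σ₂ : ℕ → ℕ)
    (hσ₂ : ∀ k : ℕ, ∀ n, σ₂ k ≤ n → ∀ p : ℕ,
      ∑ i ∈ Finset.Icc (n + 1) (n + p), |a i - a (i + 1)| ≤ 1 / (k + 1))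
    -- γ₁ is a Cauchy modulus of Σ |1 - lam (n+1) / lam n|
    (γ₁ : ℕ → ℕ)
    (hγ₁ : ∀ k : ℕ, ∀ n, γ₁ k ≤ n → ∀ p : ℕ,
      ∑ i ∈ Finset.Icc (n + 1) (n + p), |1 - lam (i + 1) / lam i| ≤ 1 / (k + 1))
    (z : X) (hz : (0 : X) ∈ A z)
    (Kz : ℕ) (hKz1 : 1 ≤ Kz)
    (hKz : max ‖x - z‖ (‖f z - z‖ / (1 - α)) ≤ (Kz : ℝ))
    (χ : ℕ → ℕ)
    (hχ : ∀ k : ℕ, χ k = max (σ₂ (4 * Kz * (k + 1) - 1)) (γ₁ (4 * Kz * (k + 1) - 1)))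
    (Φ : ℕ → ℕ)
    (hΦ : ∀ k : ℕ, Φ k =
      σ₁ (⌈((χ (2 * k + 1) + 1 + ⌈Real.log ((4 * Kz * (k + 1) : ℕ) : ℝ)⌉₊ : ℕ) : ℝ) /
        (1 - α)⌉₊ + 1)) :
    ∀ k : ℕ, ∀ n, Φ k ≤ n → ‖xs (n + 1) - xs n‖ ≤ 1 / (k + 1) := by
  intro k n hn
  have hα : 0 < 1 - α := sub_pos.2 hα1
  have hx : xs 0 ∈ closedBall z Kz := mem_closedBall_iff_norm.2 (hxs0 ▸ le_of_max_le_left hKz)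
  have hfz : ‖f z - z‖ ≤ (1 - α) * Kz := by
    rw [← div_le_iff₀' hα]; exact le_of_max_le_right hKz
  obtain ⟨p, rfl, hp⟩ := IsRateOfDivergence.exists_eq_add_le_mul_sum hσ₁ (fun i => (ha i).1)
    (fun i => (ha i).2) hα (by linarith) (hΦ k ▸ hn)
  have hm : 0 < 4 * Kz * (2 * k + 1 + 1) := by positivity
  have hsa := IsCauchyModulus.sum_range_le hσ₂ hm ((hχ _).trans_ge (le_max_left _ _)) p
  have hsl := IsCauchyModulus.sum_range_le hγ₁ hm ((hχ _).trans_ge (le_max_right _ _)) p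
  have hC : (0 : ℝ) < ((4 * Kz * (k + 1) : ℕ) : ℝ) := by positivity
  have hexp : Real.exp (-((1 - α) * ∑ i ∈ range p, a (χ (2 * k + 1) + 1 + 1 + i))) ≤
      (((4 * Kz * (k + 1) : ℕ) : ℝ))⁻¹ := by
    rw [← Real.exp_log hC, ← Real.exp_neg]
    exact Real.exp_le_exp.2 (neg_le_neg ((Nat.le_ceil _).trans hp))
  calc ‖xs (χ (2 * k + 1) + 1 + p + 1) - xs (χ (2 * k + 1) + 1 + p)‖
      ≤ _ := IsVAMIteration.norm_succ_sub_le_exp hxs hA hJ hz hα0 hα1.le hf hfz ha hlam hx _ p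
    _ ≤ 2 * Kz * (((4 * Kz * (k + 1) : ℕ) : ℝ))⁻¹ +
        2 * Kz * (1 / ((4 * Kz * (2 * k + 1 + 1) : ℕ) : ℝ) +
          1 / ((4 * Kz * (2 * k + 1 + 1) : ℕ) : ℝ)) := by
      gcongr
    _ = 1 / (k + 1) := by
      have : (Kz : ℝ) ≠ 0 := by positivity
      push_cast
      field_simp
      ring

/-- Rate of asymptotic regularity of the VAM iteration (no error terms). -/
theorem stmt_15 {X : Type*} [NormedAddCommGroup X] [NormedSpace ℝ X] [CompleteSpace X]
    (A : X → Set X)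
    (hA : ∀ x y u v : X, u ∈ A x → v ∈ A y → ∀ γ : ℝ, 0 < γ →
      ‖x - y‖ ≤ ‖x - y + γ • (u - v)‖)
    (hzer : ∃ z : X, (0 : X) ∈ A z)
    (Jr : ℝ → X → X)
    (hJ : ∀ γ : ℝ, 0 < γ → ∀ x : X, γ⁻¹ • (x - Jr γ x) ∈ A (Jr γ x))
    (α : ℝ) (hα0 : 0 ≤ α) (hα1 : α < 1)
    (f : X → X) (hf : ∀ x y : X, ‖f x - f y‖ ≤ α * ‖x - y‖)
    (x : X)
    (a : ℕ → ℝ) (ha : ∀ n, a n ∈ Set.Icc (0 : ℝ) 1)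
    (lam : ℕ → ℝ) (hlam : ∀ n, 0 < lam n)
    (xs : ℕ → X) (hxs0 : xs 0 = x)
    (hxs : ∀ n : ℕ, xs (n + 1) = a n • f (xs n) + (1 - a n) • Jr (lam n) (xs n))
    -- σ₁ is a rate of divergence of Σ a n
    (σ₁ : ℕ → ℕ) (hσ₁ : ∀ n : ℕ, (n : ℝ) ≤ ∑ i ∈ Finset.range (σ₁ n + 1), a i)
    -- σ₂ is a Cauchy modulus of Σ |a n - a (n+1)|
    (σ₂ : ℕ → ℕ)
    (hσ₂ : ∀ k : ℕ, ∀ n, σ₂ k ≤ n → ∀ p : ℕ,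
      ∑ i ∈ Finset.Icc (n + 1) (n + p), |a i - a (i + 1)| ≤ 1 / (k + 1))
    -- γ₁ is a Cauchy modulus of Σ |1 - lam (n+1) / lam n|
    (γ₁ : ℕ → ℕ)
    (hγ₁ : ∀ k : ℕ, ∀ n, γ₁ k ≤ n → ∀ p : ℕ,
      ∑ i ∈ Finset.Icc (n + 1) (n + p), |1 - lam (i + 1) / lam i| ≤ 1 / (k + 1))
    (z : X) (hz : (0 : X) ∈ A z)
    (Kz : ℕ) (hKz1 : 1 ≤ Kz)
    (hKz : max ‖x - z‖ (‖f z - z‖ / (1 - α)) ≤ (Kz : ℝ))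
    (χ : ℕ → ℕ)
    (hχ : ∀ k : ℕ, χ k = max (σ₂ (4 * Kz * (k + 1) - 1)) (γ₁ (4 * Kz * (k + 1) - 1)))
    (Φ : ℕ → ℕ)
    (hΦ : ∀ k : ℕ, Φ k =
      σ₁ (⌈((χ (2 * k + 1) + 1 + ⌈Real.log ((4 * Kz * (k + 1) : ℕ) : ℝ)⌉₊ : ℕ) : ℝ) /
        (1 - α)⌉₊ + 1)) :
    ∀ k : ℕ, ∀ n, Φ k ≤ n → ‖xs (n + 1) - xs n‖ ≤ 1 / (k + 1) :=
  stmt_15_general A hA Jr hJ α hα0 hα1 f hf x a ha lam hlam xs hxs0 hxs σ₁ hσ₁ σ₂ hσ₂ γ₁ hγ₁ z hz Kz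
    hKz1 hKz χ hχ Φ hΦ
end

section
/- Let X be a real Banach space, A : X → Set X an accretive operator with zer A ≠ ∅, and for each γ > 0 let J_γ : X → X be a resolvent function of A. Let α ∈ [0,1), f : X → X an α-contraction, x ∈ X, (α_n) a sequence in [0,1], (λ_n) a sequence in (0,∞), and (x_n) the VAM iteration x_0 = x, x_{n+1} = α_n • f(x_n) + (1 − α_n) • J_{λ_n}(x_n). Let z ∈ zer A and K*_z ∈ ℕ, K*_z ≥ 1, with K*_z ≥ max{‖x − z‖, ‖f(z) − z‖/(1 − α)}, and let Φ* be a rate of asymptotic regularity of (x_n). (1) If σ₃ is a rate of convergence of (α_n) towards 0, then Ψ*(k) = max{σ₃(4K*_z(k+1) − 1), Φ*(2k+1)} is a rate of (J_{λ_n})-asymptotic regularity of (x_n). (2) If moreover Λ ∈ ℕ, Λ ≥ 1, and N_Λ ∈ ℕ satisfy λ_n ≥ 1/Λ for all n ≥ N_Λ, and m ∈ ℕ, Λ_m ∈ ℕ with Λ_m ≥ 1 and Λ_m ≥ λ_m, then Θ*_m(k) = max{N_Λ, Ψ*(Λ_m·Λ·(k+1) − 1), Ψ*(2k+1)} is a rate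 of J_{λ_m}-asymptotic regularity of (x_n). -/
/-!
Fix a zero `z` of `A`. Every resolvent is nonexpansive and fixes `z`, and `f` maps the ball
`closedBall z K*_z` into itself, so by convexity the whole VAM iteration stays in that ball.
Since `J_{λ_n} x_n - x_n = (x_{n+1} - x_n) + α_n (J_{λ_n} x_n - f x_n)`, with the last difference
bounded by `2 K*_z`, the first rate follows from the rates for `x_{n+1} - x_n` and `α_n`.
The second one follows from the resolvent identity, which gives
`‖J_γ p - p‖ ≤ max 2 (γ / λ) * ‖J_λ p - p‖`, together with `λ_m / λ_n ≤ Λ_m Λ` for `n ≥ N_Λ`.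
-/

open Metric Set

section Resolvent

variable {X : Type*} [NormedAddCommGroup X] [NormedSpace ℝ X]

def Accretive (A : X → Set X) : Prop :=
  ∀ x y u v : X, u ∈ A x → v ∈ A y → ∀ γ : ℝ, 0 < γ → ‖x - y‖ ≤ ‖x - y + γ • (u - v)‖

def IsResolvent (A : X → Set X) (γ : ℝ) (J : X → X) : Prop :=
  ∀ x : X, γ⁻¹ • (x - J x) ∈ A (J x)

variable {A : X → Set X} {γ l : ℝ} {J J' : X → X}

namespace Accretive

theorem resolvent_apply_eq_of_zero_mem (hA : Accretive A) (hγ : 0 < γ) (hJ : IsResolvent A γ J)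
    {z : X} (hz : 0 ∈ A z) : J z = z := by
  have h := hA _ _ _ _ (hJ z) hz γ hγ
  rw [sub_zero, smul_smul, mul_inv_cancel₀ hγ.ne', one_smul, sub_add_sub_cancel', sub_self,
    norm_zero] at h
  exact sub_eq_zero.mp (norm_le_zero_iff.mp h)

theorem norm_resolvent_sub_le (hA : Accretive A) (hγ : 0 < γ) (hJ : IsResolvent A γ J)
    (p q : X) : ‖J p - J q‖ ≤ ‖p - q‖ := by
  have h := hA _ _ _ _ (hJ p) (hJ q) γ hγ
  rwa [← smul_sub, smul_smul, mul_inv_cancel₀ hγ.ne', one_smul,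
    show J p - J q + (p - J p - (q - J q)) = p - q by abel] at h

theorem norm_resolvent_sub_resolvent_le (hA : Accretive A) (hγ : 0 < γ)
    (hJ : IsResolvent A γ J) (hJ' : IsResolvent A l J') (p : X) :
    ‖J p - J' p‖ ≤ |1 - γ / l| * ‖J' p - p‖ := by
  have h := hA _ _ _ _ (hJ p) (hJ' p) γ hγ
  have e : J p - J' p + γ • (γ⁻¹ • (p - J p) - l⁻¹ • (p - J' p)) = (1 - γ / l) • (p - J' p) := by
    rw [smul_sub, smul_smul, smul_smul, mul_inv_cancel₀ hγ.ne', one_smul, ← div_eq_mul_inv,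
      sub_smul, one_smul]
    abel
  rwa [e, norm_smul, Real.norm_eq_abs, norm_sub_rev p] at h

theorem norm_resolvent_sub_self_le (hA : Accretive A) (hγ : 0 < γ) (hl : 0 < l)
    (hJ : IsResolvent A γ J) (hJ' : IsResolvent A l J') (p : X) :
    ‖J p - p‖ ≤ max 2 (γ / l) * ‖J' p - p‖ := by
  have hfactor : |1 - γ / l| + 1 ≤ max 2 (γ / l) := by
    have : 0 ≤ γ / l := by positivity
    rcases abs_cases (1 - γ / l) with ⟨h, _⟩ | ⟨h, _⟩ <;> rw [h]
    · exact (by linarith : 1 - γ / l + 1 ≤ 2).trans (le_max_left _ _)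
    · exact (by linarith : -(1 - γ / l) + 1 ≤ γ / l).trans (le_max_right _ _)
  calc ‖J p - p‖ ≤ ‖J p - J' p‖ + ‖J' p - p‖ := norm_sub_le_norm_sub_add_norm_sub _ _ _
    _ ≤ |1 - γ / l| * ‖J' p - p‖ + ‖J' p - p‖ := by
      gcongr; exact hA.norm_resolvent_sub_resolvent_le hγ hJ hJ' p
    _ = (|1 - γ / l| + 1) * ‖J' p - p‖ := by ring
    _ ≤ max 2 (γ / l) * ‖J' p - p‖ := by gcongr

theorem mapsTo_resolvent_closedBall (hA : Accretive A) (hγ : 0 < γ) (hJ : IsResolvent A γ J)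
    {z : X} (hz : 0 ∈ A z) (r : ℝ) : MapsTo J (closedBall z r) (closedBall z r) := by
  intro y hy
  rw [mem_closedBall_iff_norm] at hy ⊢
  calc ‖J y - z‖ = ‖J y - J z‖ := by rw [hA.resolvent_apply_eq_of_zero_mem hγ hJ hz]
    _ ≤ r := (hA.norm_resolvent_sub_le hγ hJ y z).trans hy

end Accretive

end Resolvent

section Iteration

variable {X : Type*} [SeminormedAddCommGroup X]

theorem mapsTo_closedBall_of_contraction {f : X → X} {α r : ℝ} (hα : 0 ≤ α)
    (hf : ∀ x y : X, ‖f x - f y‖ ≤ α * ‖x - y‖) {z : X} (hz : ‖f z - z‖ ≤ (1 - α) * r) :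
    MapsTo f (closedBall z r) (closedBall z r) := by
  intro y hy
  rw [mem_closedBall_iff_norm] at hy ⊢
  calc ‖f y - z‖ ≤ ‖f y - f z‖ + ‖f z - z‖ := norm_sub_le_norm_sub_add_norm_sub _ _ _
    _ ≤ α * r + (1 - α) * r := by gcongr; exact (hf y z).trans (by gcongr)
    _ = r := by ring

variable [NormedSpace ℝ X]

theorem Convex.mem_of_recurrence {S : Set X} (hS : Convex ℝ S) {f : X → X} {T : ℕ → X → X}
    {a : ℕ → ℝ} {xs : ℕ → X} (hf : MapsTo f S S) (hT : ∀ n, MapsTo (T n) S S)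
    (ha : ∀ n, a n ∈ Icc (0 : ℝ) 1)
    (hxs : ∀ n, xs (n + 1) = a n • f (xs n) + (1 - a n) • T n (xs n)) (h0 : xs 0 ∈ S) :
    ∀ n, xs n ∈ S
  | 0 => h0
  | n + 1 => by
    have hxn := hS.mem_of_recurrence hf hT ha hxs h0 n
    rw [hxs n]
    exact hS (hf hxn) (hT n hxn) (ha n).1 (by linarith [(ha n).2]) (by ring)

theorem norm_sub_le_of_eq_convex_comb {a : ℝ} (ha : 0 ≤ a) {u v y y' : X}
    (hy' : y' = a • u + (1 - a) • v) : ‖v - y‖ ≤ ‖y' - y‖ + a * ‖v - u‖ := by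
  have e : v - y = (y' - y) + a • (v - u) := by
    rw [hy', smul_sub, sub_smul, one_smul]; abel
  rw [e]
  exact (norm_add_le _ _).trans_eq (by rw [norm_smul, Real.norm_of_nonneg ha])

end Iteration

theorem Nat.cast_mul_succ_sub_one_add_one {N : ℕ} (hN : N ≠ 0) (k : ℕ) :
    (((N * (k + 1) - 1 : ℕ) : ℝ) + 1) = N * (k + 1) := by
  rw [Nat.cast_pred (by positivity)]; push_cast; ring

theorem Nat.cast_two_mul_add_one_add_one (k : ℕ) :
    (((2 * k + 1 : ℕ) : ℝ) + 1) = 2 * (k + 1) := by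
  push_cast; ring

section Rates

variable {X : Type*} [NormedAddCommGroup X] [NormedSpace ℝ X]

theorem norm_sub_self_le_of_rates {f : X → X} {T : ℕ → X → X} {a : ℕ → ℝ} {xs : ℕ → X}
    (ha : ∀ n, 0 ≤ a n) (hxs : ∀ n, xs (n + 1) = a n • f (xs n) + (1 - a n) • T n (xs n))
    {K : ℕ} (hK : K ≠ 0) (hbd : ∀ n, ‖T n (xs n) - f (xs n)‖ ≤ 2 * K)
    {Φ : ℕ → ℕ} (hΦ : ∀ k : ℕ, ∀ n, Φ k ≤ n → ‖xs (n + 1) - xs n‖ ≤ 1 / (k + 1))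
    {σ : ℕ → ℕ} (hσ : ∀ k : ℕ, ∀ n, σ k ≤ n → a n ≤ 1 / (k + 1))
    {k n : ℕ} (hn : max (σ (4 * K * (k + 1) - 1)) (Φ (2 * k + 1)) ≤ n) :
    ‖T n (xs n) - xs n‖ ≤ 1 / (k + 1) := by
  have hstep := hΦ _ n (le_of_max_le_right hn)
  have han := hσ _ n (le_of_max_le_left hn)
  rw [Nat.cast_two_mul_add_one_add_one] at hstep
  rw [Nat.cast_mul_succ_sub_one_add_one (by positivity)] at han
  have hKpos : (0 : ℝ) < K := by positivity
  calc ‖T n (xs n) - xs n‖ ≤ ‖xs (n + 1) - xs n‖ + a n * ‖T n (xs n) - f (xs n)‖ :=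
        norm_sub_le_of_eq_convex_comb (ha n) (hxs n)
    _ ≤ 1 / (2 * (k + 1)) + 1 / ((4 * K : ℕ) * (k + 1)) * (2 * K) := by
        gcongr
        exact hbd n
    _ = 1 / (k + 1) := by push_cast; field_simp; ring

theorem Accretive.norm_resolvent_sub_self_le_of_rate {A : X → Set X} (hA : Accretive A)
    {Jr : ℝ → X → X} (hJ : ∀ γ : ℝ, 0 < γ → IsResolvent A γ (Jr γ))
    {lam : ℕ → ℝ} (hlam : ∀ n, 0 < lam n) {xs : ℕ → X} {Ψ : ℕ → ℕ}
    (hΨ : ∀ k : ℕ, ∀ n, Ψ k ≤ n → ‖Jr (lam n) (xs n) - xs n‖ ≤ 1 / (k + 1))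
    {Λ : ℕ} (hΛ : 1 ≤ Λ) {NΛ : ℕ} (hNΛ : ∀ n : ℕ, NΛ ≤ n → 1 / (Λ : ℝ) ≤ lam n)
    {m Λm : ℕ} (hlm : lam m ≤ Λm) {k n : ℕ}
    (hn : max (max NΛ (Ψ (Λm * Λ * (k + 1) - 1))) (Ψ (2 * k + 1)) ≤ n) :
    ‖Jr (lam m) (xs n) - xs n‖ ≤ 1 / (k + 1) := by
  have hΛm : 0 < (Λm : ℝ) := (hlam m).trans_le hlm
  have hΛpos : 0 < (Λ : ℝ) := by exact_mod_cast hΛ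
  have hΛmΛ : Λm * Λ ≠ 0 := by
    have : Λm ≠ 0 := by exact_mod_cast hΛm.ne'
    positivity
  simp only [max_le_iff] at hn
  obtain ⟨⟨hnN, hn₁⟩, hn₂⟩ := hn
  have hs₁ := hΨ _ n hn₁
  have hs₂ := hΨ _ n hn₂
  rw [Nat.cast_mul_succ_sub_one_add_one hΛmΛ] at hs₁
  rw [Nat.cast_two_mul_add_one_add_one] at hs₂
  have hratio : lam m / lam n ≤ Λm * Λ := by
    have := hNΛ n hnN
    rw [div_le_iff₀ (hlam n)]
    calc lam m ≤ Λm := hlm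
      _ = Λm * Λ * (1 / Λ) := by field_simp
      _ ≤ Λm * Λ * lam n := by gcongr
  refine (hA.norm_resolvent_sub_self_le (hlam m) (hlam n) (hJ _ (hlam m)) (hJ _ (hlam n)) _).trans
    ((max_mul_of_nonneg _ _ (norm_nonneg _)).trans_le (max_le ?_ ?_))
  · calc 2 * ‖Jr (lam n) (xs n) - xs n‖ ≤ 2 * (1 / (2 * (k + 1))) := by gcongr
      _ = 1 / (k + 1) := by field_simp
  · calc lam m / lam n * ‖Jr (lam n) (xs n) - xs n‖
        ≤ Λm * Λ * (1 / ((Λm * Λ : ℕ) * (k + 1))) := by gcongr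
      _ = 1 / (k + 1) := by push_cast; field_simp

end Rates

theorem stmt_16_general {X : Type*} [NormedAddCommGroup X] [NormedSpace ℝ X]
    (A : X → Set X)
    (hA : ∀ x y u v : X, u ∈ A x → v ∈ A y → ∀ γ : ℝ, 0 < γ →
      ‖x - y‖ ≤ ‖x - y + γ • (u - v)‖)
    (Jr : ℝ → X → X)
    (hJ : ∀ γ : ℝ, 0 < γ → ∀ x : X, γ⁻¹ • (x - Jr γ x) ∈ A (Jr γ x))
    (α : ℝ) (hα0 : 0 ≤ α) (hα1 : α < 1)
    (f : X → X) (hf : ∀ x y : X, ‖f x - f y‖ ≤ α * ‖x - y‖)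
    (x : X)
    (a : ℕ → ℝ) (ha : ∀ n, a n ∈ Set.Icc (0 : ℝ) 1)
    (lam : ℕ → ℝ) (hlam : ∀ n, 0 < lam n)
    (xs : ℕ → X) (hxs0 : xs 0 = x)
    (hxs : ∀ n : ℕ, xs (n + 1) = a n • f (xs n) + (1 - a n) • Jr (lam n) (xs n))
    (z : X) (hz : (0 : X) ∈ A z)
    (Kz : ℕ) (hKz1 : 1 ≤ Kz)
    (hKz : max ‖x - z‖ (‖f z - z‖ / (1 - α)) ≤ (Kz : ℝ))
    -- Φ is a rate of asymptotic regularity of (xs n)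
    (Φ : ℕ → ℕ) (hΦ : ∀ k : ℕ, ∀ n, Φ k ≤ n → ‖xs (n + 1) - xs n‖ ≤ 1 / (k + 1))
    -- σ₃ is a rate of convergence of (a n) towards 0
    (σ₃ : ℕ → ℕ) (hσ₃ : ∀ k : ℕ, ∀ n, σ₃ k ≤ n → a n ≤ 1 / (k + 1))
    (Ψ : ℕ → ℕ)
    (hΨdef : ∀ k : ℕ, Ψ k = max (σ₃ (4 * Kz * (k + 1) - 1)) (Φ (2 * k + 1))) :
    -- (1) Ψ is a rate of (J_{λ_n})-asymptotic regularity of (xs n)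
    (∀ k : ℕ, ∀ n, Ψ k ≤ n → ‖Jr (lam n) (xs n) - xs n‖ ≤ 1 / (k + 1)) ∧
    -- (2) Θ_m is a rate of J_{λ_m}-asymptotic regularity of (xs n)
    (∀ Λ : ℕ, 1 ≤ Λ → ∀ NΛ : ℕ, (∀ n : ℕ, NΛ ≤ n → 1 / (Λ : ℝ) ≤ lam n) →
      ∀ m Λm : ℕ, 1 ≤ Λm → lam m ≤ (Λm : ℝ) →
      ∀ Θ : ℕ → ℕ,
        (∀ k : ℕ, Θ k = max (max NΛ (Ψ (Λm * Λ * (k + 1) - 1))) (Ψ (2 * k + 1))) →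
        ∀ k : ℕ, ∀ n, Θ k ≤ n → ‖Jr (lam m) (xs n) - xs n‖ ≤ 1 / (k + 1)) := by
  have hA : Accretive A := hA
  have hfz : ‖f z - z‖ ≤ (1 - α) * Kz := by
    have := (le_max_right _ _).trans hKz
    rwa [div_le_iff₀ (by linarith), mul_comm] at this
  have hf_ball := mapsTo_closedBall_of_contraction hα0 hf hfz
  have hJ_ball n := hA.mapsTo_resolvent_closedBall (hlam n) (hJ _ (hlam n)) hz Kz
  have hxs_ball : ∀ n, xs n ∈ closedBall z Kz :=
    (convex_closedBall z Kz).mem_of_recurrence hf_ball hJ_ball ha hxs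
      (by rw [hxs0, mem_closedBall_iff_norm]; exact (le_max_left _ _).trans hKz)
  have hdiam n : ‖Jr (lam n) (xs n) - f (xs n)‖ ≤ 2 * Kz := by
    rw [← dist_eq_norm, two_mul]
    exact (dist_triangle_right _ _ z).trans
      (add_le_add (hJ_ball n (hxs_ball n)) (hf_ball (hxs_ball n)))
  have part1 k n (hn : Ψ k ≤ n) : ‖Jr (lam n) (xs n) - xs n‖ ≤ 1 / (k + 1) :=
    norm_sub_self_le_of_rates (fun n ↦ (ha n).1) hxs (by omega) hdiam hΦ hσ₃ (hΨdef k ▸ hn)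
  exact ⟨part1, fun Λ hΛ NΛ hNΛ m Λm _ hlm Θ hΘ k n hn ↦
    hA.norm_resolvent_sub_self_le_of_rate hJ hlam part1 hΛ hNΛ hlm (hΘ k ▸ hn)⟩

/-- Rates of `(J_{λ_n})`- and `J_{λ_m}`-asymptotic regularity of the VAM iteration. -/
theorem stmt_16 {X : Type*} [NormedAddCommGroup X] [NormedSpace ℝ X] [CompleteSpace X]
    (A : X → Set X)
    (hA : ∀ x y u v : X, u ∈ A x → v ∈ A y → ∀ γ : ℝ, 0 < γ →
      ‖x - y‖ ≤ ‖x - y + γ • (u - v)‖)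
    (hzer : ∃ z : X, (0 : X) ∈ A z)
    (Jr : ℝ → X → X)
    (hJ : ∀ γ : ℝ, 0 < γ → ∀ x : X, γ⁻¹ • (x - Jr γ x) ∈ A (Jr γ x))
    (α : ℝ) (hα0 : 0 ≤ α) (hα1 : α < 1)
    (f : X → X) (hf : ∀ x y : X, ‖f x - f y‖ ≤ α * ‖x - y‖)
    (x : X)
    (a : ℕ → ℝ) (ha : ∀ n, a n ∈ Set.Icc (0 : ℝ) 1)
    (lam : ℕ → ℝ) (hlam : ∀ n, 0 < lam n)
    (xs : ℕ → X) (hxs0 : xs 0 = x)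
    (hxs : ∀ n : ℕ, xs (n + 1) = a n • f (xs n) + (1 - a n) • Jr (lam n) (xs n))
    (z : X) (hz : (0 : X) ∈ A z)
    (Kz : ℕ) (hKz1 : 1 ≤ Kz)
    (hKz : max ‖x - z‖ (‖f z - z‖ / (1 - α)) ≤ (Kz : ℝ))
    -- Φ is a rate of asymptotic regularity of (xs n)
    (Φ : ℕ → ℕ) (hΦ : ∀ k : ℕ, ∀ n, Φ k ≤ n → ‖xs (n + 1) - xs n‖ ≤ 1 / (k + 1))
    -- σ₃ is a rate of convergence of (a n) towards 0
    (σ₃ : ℕ → ℕ) (hσ₃ : ∀ k : ℕ, ∀ n, σ₃ k ≤ n → a n ≤ 1 / (k + 1))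
    (Ψ : ℕ → ℕ)
    (hΨdef : ∀ k : ℕ, Ψ k = max (σ₃ (4 * Kz * (k + 1) - 1)) (Φ (2 * k + 1))) :
    -- (1) Ψ is a rate of (J_{λ_n})-asymptotic regularity of (xs n)
    (∀ k : ℕ, ∀ n, Ψ k ≤ n → ‖Jr (lam n) (xs n) - xs n‖ ≤ 1 / (k + 1)) ∧
    -- (2) Θ_m is a rate of J_{λ_m}-asymptotic regularity of (xs n)
    (∀ Λ : ℕ, 1 ≤ Λ → ∀ NΛ : ℕ, (∀ n : ℕ, NΛ ≤ n → 1 / (Λ : ℝ) ≤ lam n) →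
      ∀ m Λm : ℕ, 1 ≤ Λm → lam m ≤ (Λm : ℝ) →
      ∀ Θ : ℕ → ℕ,
        (∀ k : ℕ, Θ k = max (max NΛ (Ψ (Λm * Λ * (k + 1) - 1))) (Ψ (2 * k + 1))) →
        ∀ k : ℕ, ∀ n, Θ k ≤ n → ‖Jr (lam m) (xs n) - xs n‖ ≤ 1 / (k + 1)) :=
  stmt_16_general A hA Jr hJ α hα0 hα1 f hf x a ha lam hlam xs hxs0 hxs z hz Kz hKz1 hKz Φ hΦ σ₃ hσ₃
    Ψ hΨdef
end
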